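/- For every invertible real d×d matrix A and nonzero u ∈ ℝ^d, one has d_P(overline{A*u}, ῡ₊(A*)) · δ_P(ū, ῡ₊(A)) ≤ γ₁₂(A), where d_P(ū, v̄) = ‖u ∧ v‖/(‖u‖‖v‖) is the projective distance, δ_P(ū, v̄) = |⟨u,v⟩|/(‖u‖‖v‖), ῡ₊(A) is the top singular direction in the image of A, and γ₁₂(A) = σ₂(A)/σ₁(A). -/

import Mathlib

/-!
Write `A = K D L`. Since `K` and `L` are orthogonal, both projective quantities are invariant under
them, and the claim reduces to the diagonal case with `u` replaced by `x = Kᵀ u`, `A* u` by `D x`,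
and both top directions by `e₀`. There `δ_P(x, e₀) = |x₀| / ‖x‖ ≤ ‖D x‖ / (σ₁ ‖x‖)`, while
`d_P(D x, e₀) ‖D x‖` is the norm of the part of `D x` orthogonal to `e₀`, which is at most
`σ₂ ‖x‖` because `D` scales every coordinate but the first by at most `σ₂`.
-/

open Matrix

noncomputable def euc {d : ℕ} (A : Matrix (Fin d) (Fin d) ℝ) :
    EuclideanSpace ℝ (Fin d) →L[ℝ] EuclideanSpace ℝ (Fin d) :=
  Matrix.toEuclideanCLM (𝕜 := ℝ) A

/-- The projective quantity `δ_P(ū, v̄) = |⟨u,v⟩| / (‖u‖‖v‖)`. -/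
noncomputable def deltaP {d : ℕ} (u v : EuclideanSpace ℝ (Fin d)) : ℝ :=
  |(inner ℝ u v : ℝ)| / (‖u‖ * ‖v‖)

/-- The projective distance `d_P(ū, v̄) = ‖u ∧ v‖ / (‖u‖‖v‖)`, expressed via
`‖u ∧ v‖² = ‖u‖²‖v‖² − ⟨u,v⟩²`. -/
noncomputable def dP {d : ℕ} (u v : EuclideanSpace ℝ (Fin d)) : ℝ :=
  Real.sqrt (‖u‖ ^ 2 * ‖v‖ ^ 2 - (inner ℝ u v : ℝ) ^ 2) / (‖u‖ * ‖v‖)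

variable {d : ℕ}

section Orthogonal

variable {U : EuclideanSpace ℝ (Fin d) →L[ℝ] EuclideanSpace ℝ (Fin d)}

lemma euc_mem_unitary {M : Matrix (Fin d) (Fin d) ℝ} (hM : M * Mᵀ = 1) :
    euc M ∈ unitary (EuclideanSpace ℝ (Fin d) →L[ℝ] EuclideanSpace ℝ (Fin d)) :=
  Unitary.map_mem (Matrix.toEuclideanCLM (𝕜 := ℝ)) <| mem_unitaryGroup_iff.mpr <| by
    rwa [star_eq_conjTranspose, conjTranspose_eq_transpose_of_trivial]

lemma star_euc (M : Matrix (Fin d) (Fin d) ℝ) : star (euc M) = euc Mᵀ := by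
  rw [euc, ← map_star, star_eq_conjTranspose, conjTranspose_eq_transpose_of_trivial, euc]

lemma dP_map_of_mem_unitary (hU : U ∈ unitary _) (x y : EuclideanSpace ℝ (Fin d)) :
    dP (U x) (U y) = dP x y := by
  simp only [dP, U.norm_map_of_mem_unitary hU, U.inner_map_map_of_mem_unitary hU]

lemma deltaP_map_of_mem_unitary (hU : U ∈ unitary _) (x y : EuclideanSpace ℝ (Fin d)) :
    deltaP (U x) (U y) = deltaP x y := by
  simp only [deltaP, U.norm_map_of_mem_unitary hU, U.inner_map_map_of_mem_unitary hU]

lemma deltaP_map_right_of_mem_unitary (hU : U ∈ unitary _) (x y : EuclideanSpace ℝ (Fin d)) :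
    deltaP x (U y) = deltaP (star U x) y := by
  rw [← deltaP_map_of_mem_unitary (Unitary.star_mem hU), ← mul_apply_eq_comp,
    Unitary.star_mul_self_of_mem hU, one_apply_eq_self]

end Orthogonal

section Diagonal

lemma dP_single_one (x : EuclideanSpace ℝ (Fin d)) (i : Fin d) :
    dP x (EuclideanSpace.single i 1) = √(‖x‖ ^ 2 - x i ^ 2) / ‖x‖ := by
  simp [dP, EuclideanSpace.inner_single_right]

lemma deltaP_single_one (x : EuclideanSpace ℝ (Fin d)) (i : Fin d) :
    deltaP x (EuclideanSpace.single i 1) = |x i| / ‖x‖ := by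
  simp [deltaP, EuclideanSpace.inner_single_right]

lemma norm_sq_sub_sq_apply (x : EuclideanSpace ℝ (Fin d)) (i : Fin d) :
    ‖x‖ ^ 2 - x i ^ 2 = ∑ j ∈ Finset.univ.erase i, x j ^ 2 := by
  simp only [EuclideanSpace.norm_sq_eq, Real.norm_eq_abs, sq_abs,
    ← Finset.add_sum_erase _ _ (Finset.mem_univ i), add_sub_cancel_left]

lemma euc_diagonal_apply (s : Fin d → ℝ) (x : EuclideanSpace ℝ (Fin d)) (i : Fin d) :
    euc (diagonal s) x i = s i * x i := by
  simp [euc, mulVec_diagonal]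

lemma norm_sq_sub_sq_euc_diagonal_le {s : Fin d → ℝ} {c : ℝ} {i : Fin d}
    (hc : ∀ j ≠ i, |s j| ≤ c) (x : EuclideanSpace ℝ (Fin d)) :
    ‖euc (diagonal s) x‖ ^ 2 - euc (diagonal s) x i ^ 2 ≤ c ^ 2 * (‖x‖ ^ 2 - x i ^ 2) := by
  rw [norm_sq_sub_sq_apply, norm_sq_sub_sq_apply, Finset.mul_sum]
  refine Finset.sum_le_sum fun j hj ↦ ?_
  rw [euc_diagonal_apply, mul_pow, ← sq_abs (s j)]
  gcongr
  exact hc j (Finset.ne_of_mem_erase hj)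

theorem dP_euc_diagonal_mul_deltaP_le {s : Fin d → ℝ} {c : ℝ} {i : Fin d} (hsi : 0 < s i)
    (hc0 : 0 ≤ c) (hc : ∀ j ≠ i, |s j| ≤ c) (x : EuclideanSpace ℝ (Fin d)) :
    dP (euc (diagonal s) x) (EuclideanSpace.single i 1) *
        deltaP x (EuclideanSpace.single i 1) ≤ c / s i := by
  set y := euc (diagonal s) x
  rw [dP_single_one, deltaP_single_one, div_mul_div_comm]
  refine div_le_of_le_mul₀ (by positivity) (by positivity) ?_
  have hperp : √(‖y‖ ^ 2 - y i ^ 2) ≤ c * ‖x‖ := calc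
    √(‖y‖ ^ 2 - y i ^ 2) ≤ √(c ^ 2 * (‖x‖ ^ 2 - x i ^ 2)) :=
      Real.sqrt_le_sqrt (norm_sq_sub_sq_euc_diagonal_le hc x)
    _ = c * √(‖x‖ ^ 2 - x i ^ 2) := by rw [Real.sqrt_mul (sq_nonneg c), Real.sqrt_sq hc0]
    _ ≤ c * ‖x‖ := by
      gcongr
      exact Real.sqrt_le_iff.mpr ⟨norm_nonneg x, by linarith [sq_nonneg (x i)]⟩
  have hcoord : s i * |x i| ≤ ‖y‖ := by
    simpa [y, euc_diagonal_apply, abs_mul, abs_of_pos hsi] using y.norm_apply_le i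
  calc √(‖y‖ ^ 2 - y i ^ 2) * |x i| ≤ c * ‖x‖ * |x i| := by gcongr
    _ = c / s i * (s i * |x i| * ‖x‖) := by field_simp
    _ ≤ c / s i * (‖y‖ * ‖x‖) := by gcongr

end Diagonal

/-- Here `ῡ₊(A) = K e₀` and `ῡ₊(A*) = Lᵀ e₀`. -/
theorem stmt7 {d : ℕ} (hd : 2 ≤ d) (K L A : Matrix (Fin d) (Fin d) ℝ)
    (hK : K * Kᵀ = 1) (hL : L * Lᵀ = 1)
    (s : Fin d → ℝ) (hpos : ∀ i, 0 < s i) (hanti : Antitone s)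
    (hA : A = K * Matrix.diagonal s * L)
    (u : EuclideanSpace ℝ (Fin d)) :
    dP (euc Aᵀ u) (euc Lᵀ (EuclideanSpace.single ⟨0, by omega⟩ 1)) *
        deltaP u (euc K (EuclideanSpace.single ⟨0, by omega⟩ 1)) ≤
      s ⟨1, by omega⟩ / s ⟨0, by omega⟩ := by
  have hAt : euc Aᵀ u = euc Lᵀ (euc (diagonal s) (euc Kᵀ u)) := by
    simp only [hA, transpose_mul, diagonal_transpose, euc, map_mul, mul_apply_eq_comp]
  rw [hAt, ← star_euc, ← star_euc, dP_map_of_mem_unitary (Unitary.star_mem (euc_mem_unitary hL)),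
    deltaP_map_right_of_mem_unitary (euc_mem_unitary hK)]
  refine dP_euc_diagonal_mul_deltaP_le (hpos _) (hpos _).le (fun j hj ↦ ?_) _
  rw [abs_of_pos (hpos j)]
  exact hanti (Fin.mk_le_of_le_val (Nat.one_le_iff_ne_zero.mpr (Fin.val_ne_iff.mpr hj)))
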